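/- Let k ≥ 1 and let f : (Fin k → ℝ) → ℝ be continuously differentiable, (L,p)-Hölder smooth with L > 0, p > 0, and bounded below by f* (f(x) ≥ f* for all x). Let α ∈ (0,1), set K = L(1−α)/(1+p−α), choose λ with 0 < λ < (1/K)^{1/p}, and choose η with 0 < η < ((1+p)(λ^{1−p} − Kλ)/(L(λ^{1−p} + Kλ)^{1+p}))^{1/p}. Let T ≥ 0 and let the sequence (x_t) satisfy x_{t+1} = x_t − η·δ̂^{α,p}_{c_t} f(x_t) (coordinate-wise p-fractional gradient operator), where c_t ∈ Fin k → ℝ satisfies |x_t(i) − c_t(i)| = λ·|∂f/∂xᵢ(x_t)|^{1/p} for every i. Set ψ = η·(λ^{1−p} − Kλ − (L/(1+p))·η^p·(λ^{1−p} + Kλ)^{1+p}). Then min_{0 ≤ t ≤ T} Σᵢ |∂f/∂xᵢ(x_t)|^{1+1/p} ≤ (f(x₀) − f*)/((T+1)·ψ). -/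

import Mathlib

open scoped BigOperators

/-- The Caputo fractional derivative of order `α ∈ (0,1)` with terminal `c`. -/
noncomputable def caputo (α c : ℝ) (f : ℝ → ℝ) (x : ℝ) : ℝ :=
  (1 / Real.Gamma (1 - α)) * ∫ t in c..x, deriv f t / |x - t| ^ α

/-- The `p`-fractional gradient operator `δ̂^{α,p}_c f (x)`, with the convention that it is
`0` when `x = c`. -/
noncomputable def pFracGrad (α p c : ℝ) (f : ℝ → ℝ) (x : ℝ) : ℝ :=
  if x = c then 0
  else (Real.Gamma (2 - α) * |x - c| ^ (α - p + 1) / (x - c)) * caputo α c f x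

/-- The gradient of `f : (Fin k → ℝ) → ℝ` computed coordinate-wise via partial
derivatives of the one-dimensional slices. -/
noncomputable def partialGrad {k : ℕ} (f : (Fin k → ℝ) → ℝ) (x : Fin k → ℝ) :
    Fin k → ℝ :=
  fun i => deriv (fun y : ℝ => f (Function.update x i y)) (x i)

/-- The coordinate-wise `p`-fractional gradient operator for `f : (Fin k → ℝ) → ℝ`. -/
noncomputable def pFracGradVec {k : ℕ} (α p : ℝ) (c : Fin k → ℝ)
    (f : (Fin k → ℝ) → ℝ) (x : Fin k → ℝ) : Fin k → ℝ :=
  fun i => pFracGrad α p (c i) (fun y : ℝ => f (Function.update x i y)) (x i)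

/-- `f : (Fin k → ℝ) → ℝ` is `(L,p)`-Hölder smooth. -/
def VHolderSmooth {k : ℕ} (L p : ℝ) (f : (Fin k → ℝ) → ℝ) : Prop :=
  ∀ x y : Fin k → ℝ,
    |f y - f x - ∑ i, partialGrad f x i * (y i - x i)| ≤
      L / (1 + p) * ∑ i, |y i - x i| ^ (1 + p)

/-!
Along each coordinate, integrating the Caputo integral by parts against the Taylor remainder of
the slice `g` shows that the `p`-fractional gradient equals `g' x * |x - c| ^ (1 - p)` up to an
error `K * |x - c|`, where `K = L (1 - α) / (1 + p - α)`. With `|x - c| = λ |g' x| ^ (1 / p)`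
the step therefore satisfies `g' · δ ≥ (λ ^ (1 - p) - K λ) |g'| ^ (1 + 1 / p)` and
`|δ| ≤ (λ ^ (1 - p) + K λ) |g'| ^ (1 / p)`, so Hölder smoothness yields the sufficient decrease
`f (x (t + 1)) ≤ f (x t) - ψ ∑ i, |∂ᵢ f (x t)| ^ (1 + 1 / p)` with `ψ > 0` by the choice of `λ`
and `η`. Telescoping over `t ≤ T` bounds the smallest of these sums by their average.
-/

open MeasureTheory Set Filter Topology

def HolderSmooth (L p : ℝ) (g : ℝ → ℝ) : Prop :=
  ∀ s t : ℝ, |g s - g t - deriv g t * (s - t)| ≤ L / (1 + p) * |s - t| ^ (1 + p)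

lemma abs_mul_rpow_neg_le {a C s q β : ℝ} (hC : 0 ≤ C) (hq : 0 < q) (hs : 0 ≤ s)
    (ha : |a| ≤ C * s ^ q) : |a * s ^ (-β)| ≤ C * s ^ (q - β) := by
  rcases hs.eq_or_lt with rfl | hs
  · have : a = 0 := abs_nonpos_iff.mp (by simpa [Real.zero_rpow hq.ne'] using ha)
    simp only [this, zero_mul, abs_zero]
    positivity
  · rw [abs_mul, abs_of_pos (Real.rpow_pos_of_pos hs _), sub_eq_add_neg, Real.rpow_add hs,
      ← mul_assoc]
    gcongr

lemma intervalIntegrable_sub_rpow {r : ℝ} (hr : -1 < r) (x a b : ℝ) :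
    IntervalIntegrable (fun t => (x - t) ^ r) volume a b := by
  simpa using
    (intervalIntegral.intervalIntegrable_rpow' (a := x - a) (b := x - b) hr).comp_sub_left x

lemma integral_sub_rpow {r : ℝ} (hr : -1 < r) (x a b : ℝ) :
    ∫ t in a..b, (x - t) ^ r = ((x - a) ^ (r + 1) - (x - b) ^ (r + 1)) / (r + 1) := by
  rw [intervalIntegral.integral_comp_sub_left (fun s => s ^ r) x, integral_rpow (Or.inl hr)]

section Caputo

variable {g : ℝ → ℝ} {L p α c x : ℝ}

lemma HolderSmooth.abs_taylor_le (hH : HolderSmooth L p g) {t : ℝ} (ht : t ≤ x) :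
    |g t - g x - deriv g x * (t - x)| ≤ L / (1 + p) * (x - t) ^ (1 + p) := by
  simpa [abs_sub_comm t x, abs_of_nonneg (sub_nonneg.mpr ht)] using hH t x

lemma HolderSmooth.abs_taylor_mul_rpow_le (hH : HolderSmooth L p g) (hL : 0 ≤ L) (hp : 0 < p)
    (hα : 0 ≤ α) {t : ℝ} (ht : t ≤ x) :
    |(g t - g x - deriv g x * (t - x)) * (α * (x - t) ^ (-α - 1))| ≤
      L / (1 + p) * α * (x - t) ^ (p - α) := by
  have hrem : |(g t - g x - deriv g x * (t - x)) * (x - t) ^ (-(α + 1))| ≤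
      L / (1 + p) * (x - t) ^ (p - α) := by
    convert abs_mul_rpow_neg_le (by positivity) (by linarith) (sub_nonneg.mpr ht)
      (hH.abs_taylor_le ht) using 3
    ring
  rw [mul_left_comm, abs_mul, abs_of_nonneg hα, ← neg_add', mul_right_comm, mul_comm _ α]
  exact mul_le_mul_of_nonneg_left hrem hα

lemma HolderSmooth.intervalIntegrable_taylor_mul_rpow (hH : HolderSmooth L p g)
    (hg : ContDiff ℝ 1 g) (hL : 0 ≤ L) (hp : 0 < p) (hα : α ∈ Ioo 0 1) (hcx : c ≤ x) :
    IntervalIntegrable (fun t => (g t - g x - deriv g x * (t - x)) * (α * (x - t) ^ (-α - 1)))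
      volume c x := by
  refine ((intervalIntegrable_sub_rpow (r := p - α) (by linarith [hα.2]) x c x).const_mul
    (L / (1 + p) * α)).mono_fun' ?_ ?_
  · exact ((hg.continuous.sub continuous_const).sub (by fun_prop)).aestronglyMeasurable.mul
      (measurable_const.mul ((measurable_const.sub measurable_id).pow_const _)).aestronglyMeasurable
  · rw [uIoc_of_le hcx]
    exact (ae_restrict_mem measurableSet_Ioc).mono fun t ht =>
      hH.abs_taylor_mul_rpow_le hL hp hα.1.le ht.2

lemma HolderSmooth.continuousOn_taylor_mul_rpow (hH : HolderSmooth L p g) (hg : Continuous g)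
    (hL : 0 ≤ L) (hp : 0 < p) (hα : α ∈ Ioo 0 1) :
    ContinuousOn (fun t => (g t - g x - deriv g x * (t - x)) * (x - t) ^ (-α)) (Icc c x) := by
  intro t ht
  rcases ht.2.lt_or_eq with htx | rfl
  · exact (((hg.sub continuous_const).sub (by fun_prop)).continuousAt.mul
      ((continuousAt_const.sub continuousAt_id).rpow_const
        (Or.inl (sub_ne_zero.mpr htx.ne')))).continuousWithinAt
  · have hlim : Tendsto (fun s => L / (1 + p) * (t - s) ^ (1 + p - α)) (𝓝[Icc c t] t) (𝓝 0) := by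
      have : ContinuousAt (fun s => L / (1 + p) * (t - s) ^ (1 + p - α)) t :=
        continuousAt_const.mul ((continuousAt_const.sub continuousAt_id).rpow_const
          (Or.inr (by linarith [hα.2])))
      simpa [Real.zero_rpow (by linarith [hα.2] : 1 + p - α ≠ 0)] using
        this.tendsto.mono_left nhdsWithin_le_nhds
    simp only [ContinuousWithinAt, sub_self, Real.zero_rpow (neg_ne_zero.mpr hα.1.ne'), mul_zero]
    exact squeeze_zero_norm' (eventually_nhdsWithin_of_forall fun s hs =>
      abs_mul_rpow_neg_le (by positivity) (by linarith) (sub_nonneg.mpr hs.2)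
        (hH.abs_taylor_le hs.2)) hlim

lemma intervalIntegrable_deriv_sub_mul_rpow (hg : ContDiff ℝ 1 g) (hα : α < 1) (c x : ℝ) :
    IntervalIntegrable (fun t => (deriv g t - deriv g x) * (x - t) ^ (-α)) volume c x :=
  (intervalIntegrable_sub_rpow (by linarith) x c x).continuousOn_mul
    ((hg.continuous_deriv le_rfl).sub continuous_const).continuousOn

/-- Integration by parts against the Taylor remainder `g t - g x - g' x (t - x)`, whose
`(1 + p)`-order vanishing at `t = x` kills the boundary term at the singularity of the kernel. -/
lemma integral_deriv_sub_mul_rpow_eq (hg : ContDiff ℝ 1 g) (hH : HolderSmooth L p g)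
    (hL : 0 ≤ L) (hp : 0 < p) (hα : α ∈ Ioo 0 1) (hcx : c < x) :
    ∫ t in c..x, (deriv g t - deriv g x) * (x - t) ^ (-α) =
      -((g c - g x - deriv g x * (c - x)) * (x - c) ^ (-α)) -
        ∫ t in c..x, (g t - g x - deriv g x * (t - x)) * (α * (x - t) ^ (-α - 1)) := by
  have hu : ∀ t, HasDerivAt (fun t => g t - g x - deriv g x * (t - x))
      (deriv g t - deriv g x) t := fun t =>
    ((hg.differentiable one_ne_zero t).hasDerivAt.sub_const _).sub
      (by simpa using ((hasDerivAt_id t).sub_const x).const_mul (deriv g x))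
  have hv : ∀ t < x, HasDerivAt (fun t => (x - t) ^ (-α)) (α * (x - t) ^ (-α - 1)) t :=
    fun t ht => by
      convert ((hasDerivAt_id' t).const_sub x).rpow_const (p := -α)
        (Or.inl (sub_ne_zero.mpr ht.ne')) using 1
      ring
  have hint1 := intervalIntegrable_deriv_sub_mul_rpow hg hα.2 c x
  have hint2 := hH.intervalIntegrable_taylor_mul_rpow hg hL hp hα hcx.le
  have hFTC := intervalIntegral.integral_eq_sub_of_hasDerivAt_of_le hcx.le
    (hH.continuousOn_taylor_mul_rpow hg.continuous hL hp hα)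
    (fun t ht => (hu t).mul (hv t ht.2)) (hint1.add hint2)
  rw [intervalIntegral.integral_add hint1 hint2, sub_self, sub_self,
    Real.zero_rpow (neg_ne_zero.mpr hα.1.ne'), mul_zero] at hFTC
  linarith

lemma abs_integral_deriv_sub_mul_rpow_le (hg : ContDiff ℝ 1 g) (hH : HolderSmooth L p g)
    (hL : 0 ≤ L) (hp : 0 < p) (hα : α ∈ Ioo 0 1) (hcx : c < x) :
    |∫ t in c..x, (deriv g t - deriv g x) * (x - t) ^ (-α)| ≤
      L * (x - c) ^ (1 + p - α) / (1 + p - α) := by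
  have hq : 0 < 1 + p - α := by linarith [hα.2]
  have hboundary : |(g c - g x - deriv g x * (c - x)) * (x - c) ^ (-α)| ≤
      L / (1 + p) * (x - c) ^ (1 + p - α) :=
    abs_mul_rpow_neg_le (by positivity) (by linarith) (sub_nonneg.mpr hcx.le)
      (hH.abs_taylor_le hcx.le)
  have hbulk : |∫ t in c..x, (g t - g x - deriv g x * (t - x)) * (α * (x - t) ^ (-α - 1))| ≤
      L / (1 + p) * α * ((x - c) ^ (1 + p - α) / (1 + p - α)) := by
    calc _ ≤ ∫ t in c..x, L / (1 + p) * α * (x - t) ^ (p - α) :=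
          (intervalIntegral.abs_integral_le_integral_abs hcx.le).trans <|
            intervalIntegral.integral_mono_on hcx.le
              (hH.intervalIntegrable_taylor_mul_rpow hg hL hp hα hcx.le).abs
              ((intervalIntegrable_sub_rpow (by linarith) x c x).const_mul _)
              fun t ht => hH.abs_taylor_mul_rpow_le hL hp hα.1.le ht.2
      _ = _ := by
          rw [intervalIntegral.integral_const_mul, integral_sub_rpow (by linarith), sub_self,
            Real.zero_rpow (by linarith)]
          ring_nf
  rw [integral_deriv_sub_mul_rpow_eq hg hH hL hp hα hcx]
  calc _ ≤ |(g c - g x - deriv g x * (c - x)) * (x - c) ^ (-α)| +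
        |∫ t in c..x, (g t - g x - deriv g x * (t - x)) * (α * (x - t) ^ (-α - 1))| :=
        (abs_sub _ _).trans_eq (by rw [abs_neg])
    _ ≤ L / (1 + p) * (x - c) ^ (1 + p - α) +
        L / (1 + p) * α * ((x - c) ^ (1 + p - α) / (1 + p - α)) := add_le_add hboundary hbulk
    _ = L * (x - c) ^ (1 + p - α) / (1 + p - α) := by field_simp; ring

end Caputo

section FractionalGradient

variable {g : ℝ → ℝ} {L p α c x : ℝ}

lemma Gamma_two_sub (hα : α < 1) : Real.Gamma (2 - α) = (1 - α) * Real.Gamma (1 - α) := by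
  rw [show 2 - α = (1 - α) + 1 by ring, Real.Gamma_add_one (by linarith)]

lemma caputo_eq_of_lt (hg : ContDiff ℝ 1 g) (hα : α < 1) (hcx : c < x) :
    caputo α c g x = (deriv g x * (x - c) ^ (1 - α) / (1 - α) +
      ∫ t in c..x, (deriv g t - deriv g x) * (x - t) ^ (-α)) / Real.Gamma (1 - α) := by
  have hint := intervalIntegrable_sub_rpow (r := -α) (by linarith) x c x
  have hkernel : ∫ t in c..x, deriv g t / |x - t| ^ α =
      ∫ t in c..x, deriv g x * (x - t) ^ (-α) + (deriv g t - deriv g x) * (x - t) ^ (-α) := by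
    refine intervalIntegral.integral_congr fun t ht => ?_
    rw [uIcc_of_le hcx.le] at ht
    rw [abs_of_nonneg (sub_nonneg.mpr ht.2), Real.rpow_neg (sub_nonneg.mpr ht.2)]
    ring
  rw [caputo, hkernel, intervalIntegral.integral_add (hint.const_mul _)
    (intervalIntegrable_deriv_sub_mul_rpow hg hα c x),
    intervalIntegral.integral_const_mul, integral_sub_rpow (by linarith), sub_self,
    Real.zero_rpow (by linarith)]
  ring_nf

lemma abs_pFracGrad_sub_le_of_lt (hg : ContDiff ℝ 1 g) (hH : HolderSmooth L p g)
    (hL : 0 ≤ L) (hp : 0 < p) (hα : α ∈ Ioo 0 1) (hcx : c < x) :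
    |pFracGrad α p c g x - deriv g x * (x - c) ^ (1 - p)| ≤
      L * (1 - α) / (1 + p - α) * (x - c) := by
  have hr : 0 < x - c := sub_pos.mpr hcx
  have hα1 : 0 < 1 - α := by linarith [hα.2]
  set F := ∫ t in c..x, (deriv g t - deriv g x) * (x - t) ^ (-α)
  have hdecomp : pFracGrad α p c g x - deriv g x * (x - c) ^ (1 - p) =
      (1 - α) * (x - c) ^ (α - p) * F := by
    have hΓ := Real.Gamma_pos_of_pos hα1
    rw [pFracGrad, if_neg hcx.ne', caputo_eq_of_lt hg hα.2 hcx, abs_of_pos hr,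
      Gamma_two_sub hα.2, show α - p + 1 = (α - p) + 1 by ring, Real.rpow_add hr,
      Real.rpow_one, show 1 - p = (α - p) + (1 - α) by ring, Real.rpow_add hr]
    field_simp
    ring
  have hF := abs_integral_deriv_sub_mul_rpow_le hg hH hL hp hα hcx
  rw [hdecomp, abs_mul, abs_of_pos (by positivity)]
  calc (1 - α) * (x - c) ^ (α - p) * |F|
      ≤ (1 - α) * (x - c) ^ (α - p) * (L * (x - c) ^ (1 + p - α) / (1 + p - α)) := by gcongr
    _ = L * (1 - α) / (1 + p - α) * ((x - c) ^ (α - p) * (x - c) ^ (1 + p - α)) := by ring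
    _ = L * (1 - α) / (1 + p - α) * (x - c) := by
      rw [← Real.rpow_add hr, show α - p + (1 + p - α) = 1 by ring, Real.rpow_one]

lemma caputo_comp_neg (α c x : ℝ) (g : ℝ → ℝ) :
    caputo α (-c) (fun y => g (-y)) (-x) = caputo α c g x := by
  have hintegrand : ∀ s,
      deriv (fun y => g (-y)) (-s) / |-x - -s| ^ α = -(deriv g s / |x - s| ^ α) :=
    fun s => by rw [deriv_comp_neg, neg_neg, ← neg_sub', abs_neg, neg_div]
  rw [caputo, caputo, ← intervalIntegral.integral_comp_neg
    (fun t => deriv (fun y => g (-y)) t / |-x - t| ^ α)]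
  simp only [hintegrand, intervalIntegral.integral_neg, intervalIntegral.integral_symm c x, neg_neg]

lemma pFracGrad_comp_neg (α p c x : ℝ) (g : ℝ → ℝ) :
    pFracGrad α p (-c) (fun y => g (-y)) (-x) = -pFracGrad α p c g x := by
  simp only [pFracGrad, caputo_comp_neg, neg_inj, show -x - -c = -(x - c) by ring, abs_neg]
  split_ifs
  · simp
  · rw [div_neg]; ring

lemma HolderSmooth.comp_neg (hH : HolderSmooth L p g) : HolderSmooth L p (fun y => g (-y)) := by
  intro s t
  rw [deriv_comp_neg, ← abs_neg (s - t), neg_sub']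
  convert hH (-s) (-t) using 2
  ring

lemma abs_pFracGrad_sub_le (hg : ContDiff ℝ 1 g) (hH : HolderSmooth L p g)
    (hL : 0 ≤ L) (hp : 0 < p) (hα : α ∈ Ioo 0 1) (hxc : x ≠ c) :
    |pFracGrad α p c g x - deriv g x * |x - c| ^ (1 - p)| ≤
      L * (1 - α) / (1 + p - α) * |x - c| := by
  rcases hxc.lt_or_gt with hlt | hgt
  · have h := abs_pFracGrad_sub_le_of_lt (g := fun y => g (-y)) (hg.comp contDiff_neg)
      hH.comp_neg hL hp hα (neg_lt_neg hlt)
    rw [pFracGrad_comp_neg, deriv_comp_neg, neg_neg, show -x - -c = c - x by ring] at h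
    rw [abs_of_neg (sub_neg.mpr hlt), neg_sub, ← abs_neg]
    convert h using 2
    ring
  · simpa only [abs_of_pos (sub_pos.mpr hgt)] using
      abs_pFracGrad_sub_le_of_lt hg hH hL hp hα hgt

end FractionalGradient

lemma step_bounds_of_abs_sub_le {d δ r K lam p : ℝ} (hp : 0 < p) (hlam : 0 < lam)
    (hr : r = lam * |d| ^ (1 / p)) (hδ : |δ - d * r ^ (1 - p)| ≤ K * r) :
    (lam ^ (1 - p) - K * lam) * |d| ^ (1 + 1 / p) ≤ d * δ ∧
      |δ| ≤ (lam ^ (1 - p) + K * lam) * |d| ^ (1 / p) := by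
  have ha : 0 ≤ |d| := abs_nonneg d
  have hr0 : 0 ≤ r := hr ▸ by positivity
  have hmain : |d| * r ^ (1 - p) = lam ^ (1 - p) * |d| ^ (1 / p) := by
    rw [hr, Real.mul_rpow hlam.le (by positivity), ← Real.rpow_mul ha, mul_left_comm,
      ← Real.rpow_one_add' ha (by field_simp; ring_nf; positivity)]
    congr 2
    field_simp
    ring
  have hpow : |d| * |d| ^ (1 / p) = |d| ^ (1 + 1 / p) :=
    (Real.rpow_one_add' ha (by positivity)).symm
  have herr : |d * (δ - d * r ^ (1 - p))| ≤ K * lam * |d| ^ (1 + 1 / p) := by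
    rw [abs_mul, ← hpow]
    calc |d| * |δ - d * r ^ (1 - p)| ≤ |d| * (K * r) := by gcongr
      _ = K * lam * (|d| * |d| ^ (1 / p)) := by rw [hr]; ring
  constructor
  · have hlead : d * (d * r ^ (1 - p)) = lam ^ (1 - p) * |d| ^ (1 + 1 / p) := by
      rw [← mul_assoc, ← abs_mul_abs_self, mul_assoc, hmain, ← hpow]
      ring
    nlinarith [neg_abs_le (d * (δ - d * r ^ (1 - p)))]
  · calc |δ| ≤ |d * r ^ (1 - p)| + |δ - d * r ^ (1 - p)| := by
          linarith [abs_sub_abs_le_abs_sub δ (d * r ^ (1 - p))]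
      _ ≤ lam ^ (1 - p) * |d| ^ (1 / p) + K * (lam * |d| ^ (1 / p)) := by
          rw [abs_mul, abs_of_nonneg (Real.rpow_nonneg hr0 _), hmain, ← hr]
          gcongr
      _ = (lam ^ (1 - p) + K * lam) * |d| ^ (1 / p) := by ring

lemma pFracGrad_step_bounds {g : ℝ → ℝ} {L p α lam c x : ℝ} (hg : ContDiff ℝ 1 g)
    (hH : HolderSmooth L p g) (hL : 0 ≤ L) (hp : 0 < p) (hα : α ∈ Ioo 0 1) (hlam : 0 < lam)
    (hxc : |x - c| = lam * |deriv g x| ^ (1 / p)) :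
    (lam ^ (1 - p) - L * (1 - α) / (1 + p - α) * lam) * |deriv g x| ^ (1 + 1 / p) ≤
        deriv g x * pFracGrad α p c g x ∧
      |pFracGrad α p c g x| ≤
        (lam ^ (1 - p) + L * (1 - α) / (1 + p - α) * lam) * |deriv g x| ^ (1 / p) := by
  refine step_bounds_of_abs_sub_le hp hlam hxc ?_
  by_cases hx : x = c
  · subst hx
    have hd : deriv g x = 0 := by
      rw [sub_self, abs_zero, eq_comm, mul_eq_zero_iff_left hlam.ne',
        Real.rpow_eq_zero (abs_nonneg _) (by positivity)] at hxc
      exact abs_eq_zero.mp hxc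
    simp [pFracGrad, hd]
  · exact abs_pFracGrad_sub_le hg hH hL hp hα hx

lemma VHolderSmooth.holderSmooth_update {k : ℕ} {L p : ℝ} {f : (Fin k → ℝ) → ℝ}
    (hf : VHolderSmooth L p f) (hp : 0 < p) (x : Fin k → ℝ) (i : Fin k) :
    HolderSmooth L p (fun y => f (Function.update x i y)) := by
  intro s t
  have hgrad : partialGrad f (Function.update x i t) i =
      deriv (fun y => f (Function.update x i y)) t := by
    simp only [partialGrad, Function.update_idem, Function.update_self]
  have h := hf (Function.update x i t) (Function.update x i s)
  rwa [Finset.sum_eq_single i (fun j _ hj => by simp [Function.update_of_ne hj]) (by simp),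
    Finset.sum_eq_single i (fun j _ hj => by simp [Function.update_of_ne hj,
      Real.zero_rpow (by positivity : 1 + p ≠ 0)]) (by simp),
    hgrad, Function.update_self, Function.update_self] at h

lemma VHolderSmooth.le_sub_of_step_bounds {k : ℕ} {L p a b η : ℝ} {f : (Fin k → ℝ) → ℝ}
    (hf : VHolderSmooth L p f) (hL : 0 ≤ L) (hp : 0 < p) (hb : 0 ≤ b) (hη : 0 ≤ η)
    (x δ : Fin k → ℝ)
    (hlow : ∀ i, a * |partialGrad f x i| ^ (1 + 1 / p) ≤ partialGrad f x i * δ i)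
    (hup : ∀ i, |δ i| ≤ b * |partialGrad f x i| ^ (1 / p)) :
    f (fun i => x i - η * δ i) ≤
      f x - η * (a - L / (1 + p) * η ^ p * b ^ (1 + p)) *
        ∑ i, |partialGrad f x i| ^ (1 + 1 / p) := by
  set D := partialGrad f x
  have hlin : ∑ i, D i * ((x i - η * δ i) - x i) ≤ -(η * a * ∑ i, |D i| ^ (1 + 1 / p)) := by
    rw [mul_assoc, Finset.mul_sum, Finset.mul_sum, ← Finset.sum_neg_distrib]
    refine Finset.sum_le_sum fun i _ => ?_
    nlinarith [hlow i]
  have hstep : ∀ i, |(x i - η * δ i) - x i| ^ (1 + p) ≤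
      η * η ^ p * b ^ (1 + p) * |D i| ^ (1 + 1 / p) := fun i => by
    rw [sub_sub_cancel_left, abs_neg, abs_mul, abs_of_nonneg hη, ← Real.rpow_one_add' hη
      (by positivity), show 1 + 1 / p = 1 / p * (1 + p) by field_simp; ring,
      Real.rpow_mul (abs_nonneg _), mul_assoc, ← Real.mul_rpow hb (by positivity),
      ← Real.mul_rpow hη (by positivity)]
    gcongr
    exact hup i
  have hquad : L / (1 + p) * ∑ i, |(x i - η * δ i) - x i| ^ (1 + p) ≤
      L / (1 + p) * η ^ p * b ^ (1 + p) * (η * ∑ i, |D i| ^ (1 + 1 / p)) := by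
    rw [Finset.mul_sum, Finset.mul_sum, Finset.mul_sum]
    refine Finset.sum_le_sum fun i _ => ?_
    have := mul_le_mul_of_nonneg_left (hstep i) (by positivity : 0 ≤ L / (1 + p))
    linarith
  linarith [(abs_le.mp (hf x fun i => x i - η * δ i)).2]

lemma mul_lt_rpow_one_sub {K lam p : ℝ} (hK : 0 < K) (hp : 0 < p) (hlam : 0 < lam)
    (h : lam < (1 / K) ^ (1 / p)) : K * lam < lam ^ (1 - p) := by
  rw [one_div p, Real.lt_rpow_inv_iff_of_pos hlam.le (by positivity) hp, lt_div_iff₀ hK] at h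
  rw [Real.rpow_sub hlam, Real.rpow_one, lt_div_iff₀ (by positivity)]
  nlinarith

lemma step_rate_pos {L p A B η : ℝ} (hL : 0 < L) (hp : 0 < p) (hA : 0 < A) (hB : 0 < B)
    (hη : 0 < η) (hη' : η < ((1 + p) * A / (L * B ^ (1 + p))) ^ (1 / p)) :
    0 < η * (A - L / (1 + p) * η ^ p * B ^ (1 + p)) := by
  have hBp : 0 < B ^ (1 + p) := by positivity
  rw [one_div p, Real.lt_rpow_inv_iff_of_pos hη.le (by positivity) hp,
    lt_div_iff₀ (by positivity)] at hη'
  refine mul_pos hη (sub_pos.mpr ?_)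
  rw [div_mul_eq_mul_div, div_mul_eq_mul_div, div_lt_iff₀ (by linarith)]
  linarith

lemma exists_le_div_of_le_sub_mul {a s : ℕ → ℝ} {ψ m : ℝ} (hψ : 0 < ψ)
    (hdesc : ∀ t, a (t + 1) ≤ a t - ψ * s t) (hm : ∀ t, m ≤ a t) (T : ℕ) :
    ∃ t ≤ T, s t ≤ (a 0 - m) / ((T + 1) * ψ) := by
  have htel : ∀ n, ψ * ∑ t ∈ Finset.range n, s t ≤ a 0 - a n := by
    intro n
    induction n with
    | zero => simp
    | succ n ih => rw [Finset.sum_range_succ, mul_add]; linarith [hdesc n]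
  obtain ⟨t, ht, hle⟩ := Finset.exists_le_of_sum_le (Finset.nonempty_range_add_one (n := T))
    (f := s) (g := fun _ => (a 0 - m) / ((T + 1) * ψ)) (by
      rw [Finset.sum_const, Finset.card_range, nsmul_eq_mul, Nat.cast_succ, mul_div_assoc',
        mul_div_mul_left _ _ (by positivity), le_div_iff₀ hψ, mul_comm]
      linarith [htel (T + 1), hm (T + 1)])
  exact ⟨t, Nat.lt_succ_iff.mp (Finset.mem_range.mp ht), hle⟩

theorem pFracGradDescent_convergence_general (k : ℕ) (f : (Fin k → ℝ) → ℝ)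
    (hf : ContDiff ℝ 1 f) (L p : ℝ) (hL : 0 < L) (hp : 0 < p)
    (hsmooth : VHolderSmooth L p f) (fstar : ℝ) (hfstar : ∀ x, fstar ≤ f x)
    (α : ℝ) (hα : α ∈ Set.Ioo (0 : ℝ) 1) (K : ℝ) (hK : K = L * (1 - α) / (1 + p - α))
    (lam : ℝ) (hlam : 0 < lam) (hlam' : lam < (1 / K) ^ (1 / p))
    (η : ℝ) (hη : 0 < η)
    (hη' : η < ((1 + p) * (lam ^ (1 - p) - K * lam) /
      (L * (lam ^ (1 - p) + K * lam) ^ (1 + p))) ^ (1 / p))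
    (T : ℕ) (x c : ℕ → Fin k → ℝ)
    (hc : ∀ t i, |x t i - c t i| = lam * |partialGrad f (x t) i| ^ (1 / p))
    (hrec : ∀ t, x (t + 1) = fun i => x t i - η * pFracGradVec α p (c t) f (x t) i)
    (ψ : ℝ) (hψ : ψ = η * (lam ^ (1 - p) - K * lam -
      L / (1 + p) * η ^ p * (lam ^ (1 - p) + K * lam) ^ (1 + p))) :
    ∃ t ≤ T, ∑ i, |partialGrad f (x t) i| ^ (1 + 1 / p) ≤
      (f (x 0) - fstar) / (((T : ℝ) + 1) * ψ) := by
  have hK0 : 0 < K := hK ▸ div_pos (mul_pos hL (by linarith [hα.2])) (by linarith [hα.2])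
  have hgap := mul_lt_rpow_one_sub hK0 hp hlam hlam'
  have hψ0 : 0 < ψ := hψ ▸ step_rate_pos hL hp (by linarith) (by positivity) hη hη'
  refine exists_le_div_of_le_sub_mul hψ0 (fun t => ?_) (fun t => hfstar (x t)) T
  have hbounds := fun i => pFracGrad_step_bounds (g := fun y => f (Function.update (x t) i y))
    (hf.comp (contDiff_update 1 (x t) i)) (hsmooth.holderSmooth_update hp (x t) i) hL.le hp hα
    hlam (hc t i)
  rw [hrec t, hψ]
  subst hK
  exact hsmooth.le_sub_of_step_bounds hL.le hp (by positivity) hη.le (x t) _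
    (fun i => (hbounds i).1) (fun i => (hbounds i).2)

/-- `O(1/T)` convergence to a stationary point of `p`-fractional gradient
descent for Hölder smooth functions. -/
theorem pFracGradDescent_convergence (k : ℕ) (hk : 1 ≤ k) (f : (Fin k → ℝ) → ℝ)
    (hf : ContDiff ℝ 1 f) (L p : ℝ) (hL : 0 < L) (hp : 0 < p)
    (hsmooth : VHolderSmooth L p f) (fstar : ℝ) (hfstar : ∀ x, fstar ≤ f x)
    (α : ℝ) (hα : α ∈ Set.Ioo (0 : ℝ) 1) (K : ℝ) (hK : K = L * (1 - α) / (1 + p - α))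
    (lam : ℝ) (hlam : 0 < lam) (hlam' : lam < (1 / K) ^ (1 / p))
    (η : ℝ) (hη : 0 < η)
    (hη' : η < ((1 + p) * (lam ^ (1 - p) - K * lam) /
      (L * (lam ^ (1 - p) + K * lam) ^ (1 + p))) ^ (1 / p))
    (T : ℕ) (x c : ℕ → Fin k → ℝ)
    (hc : ∀ t i, |x t i - c t i| = lam * |partialGrad f (x t) i| ^ (1 / p))
    (hrec : ∀ t, x (t + 1) = fun i => x t i - η * pFracGradVec α p (c t) f (x t) i)
    (ψ : ℝ) (hψ : ψ = η * (lam ^ (1 - p) - K * lam -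
      L / (1 + p) * η ^ p * (lam ^ (1 - p) + K * lam) ^ (1 + p))) :
    ∃ t ≤ T, ∑ i, |partialGrad f (x t) i| ^ (1 + 1 / p) ≤
      (f (x 0) - fstar) / (((T : ℝ) + 1) * ψ) :=
  pFracGradDescent_convergence_general k f hf L p hL hp hsmooth fstar hfstar α hα K hK lam hlam
    hlam' η hη hη' T x c hc hrec ψ hψ
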